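/- arXiv:2506.15149 — 2 statements merged into one kernel-verified Lean document; each statement's English description precedes it below -/
import Mathlib

section
/- The closure of ℍ_N in ℂ⁴ equals {π(A) : A ∈ M₂(ℂ), ‖A‖ ≤ 1}. Moreover, setting β = 1 − |x₁|² − |x₂|² + |x₃|² and δ = |x₁x₂ − x₃|, a point (a, x₁, x₂, x₃) ∈ ℂ⁴ lies in closure(ℍ_N) if and only if (x₁, x₂, x₃) ∈ closure(𝔼) and either (a = 0 and x₃ = x₁x₂) or (a ≠ 0 and β − √(β² − 4δ²) ≤ 2|a|² ≤ β + √(β² − 4δ²)). -/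
noncomputable section

open Complex

/-- The expression `1 - x₁ z₁ - x₂ z₂ + x₃ z₁ z₂`. -/
def hexDen (x : ℂ × ℂ × ℂ) (z₁ z₂ : ℂ) : ℂ :=
  1 - x.1 * z₁ - x.2.1 * z₂ + x.2.2 * z₁ * z₂

/-- The tetrablock `𝔼 ⊆ ℂ³`. -/
def tetrablock : Set (ℂ × ℂ × ℂ) :=
  {x | ∀ z₁ z₂ : ℂ, ‖z₁‖ ≤ 1 → ‖z₂‖ ≤ 1 → hexDen x z₁ z₂ ≠ 0}

/-- The distinguished boundary `b𝔼` of the tetrablock. -/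
def bE : Set (ℂ × ℂ × ℂ) :=
  {x | x.1 = (starRingEnd ℂ) x.2.1 * x.2.2 ∧ ‖x.2.2‖ = 1 ∧ ‖x.2.1‖ ≤ 1}

/-- The linear fractional map `ψ_{z₁,z₂}(a, x₁, x₂, x₃)`. -/
def psi (z₁ z₂ : ℂ) (q : ℂ × ℂ × ℂ × ℂ) : ℂ :=
  q.1 * ((Real.sqrt ((1 - ‖z₁‖ ^ 2) * (1 - ‖z₂‖ ^ 2)) : ℝ) : ℂ) / hexDen q.2 z₁ z₂

/-- `sup_{z₁,z₂ ∈ 𝔻} |ψ_{z₁,z₂}(q)|`. -/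
def supPsi (q : ℂ × ℂ × ℂ × ℂ) : ℝ :=
  sSup {r : ℝ | ∃ z₁ z₂ : ℂ, ‖z₁‖ < 1 ∧ ‖z₂‖ < 1 ∧ r = ‖psi z₁ z₂ q‖}

/-- The function `K_*` on the tetrablock. -/
def Kstar (x : ℂ × ℂ × ℂ) : ℝ :=
  sSup {r : ℝ | ∃ z₁ z₂ : ℂ, ‖z₁‖ < 1 ∧ ‖z₂‖ < 1 ∧
    r = Real.sqrt ((1 - ‖z₁‖ ^ 2) * (1 - ‖z₂‖ ^ 2)) / ‖hexDen x z₁ z₂‖}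

/-- The hexablock `ℍ ⊆ ℂ⁴`. -/
def hexablock : Set (ℂ × ℂ × ℂ × ℂ) :=
  {q | q.2 ∈ tetrablock ∧ supPsi q < 1}

/-- Operator norm of a `2 × 2` complex matrix acting on Euclidean `ℂ²`. -/
def opNorm2 (A : Matrix (Fin 2) (Fin 2) ℂ) : ℝ :=
  ‖Matrix.toEuclideanCLM (𝕜 := ℂ) A‖

/-- `π(A) = (a₂₁, a₁₁, a₂₂, det A)`. -/
def piMap (A : Matrix (Fin 2) (Fin 2) ℂ) : ℂ × ℂ × ℂ × ℂ :=
  (A 1 0, A 0 0, A 1 1, A.det)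

/-- The structured singular value `μ_hexa`, valued in `[0, ∞]`;
the infimum over the empty set is `∞`, whose inverse is `0`. -/
def muHexa (A : Matrix (Fin 2) (Fin 2) ℂ) : ENNReal :=
  (sInf {r : ENNReal | ∃ X : Matrix (Fin 2) (Fin 2) ℂ,
      X 1 0 = 0 ∧ (1 - A * X).det = 0 ∧ r = ENNReal.ofReal (opNorm2 X)})⁻¹

/-- The μ-hexablock `ℍ_μ`. -/
def hexMu : Set (ℂ × ℂ × ℂ × ℂ) :=
  {q | ∃ A : Matrix (Fin 2) (Fin 2) ℂ, muHexa A < 1 ∧ piMap A = q}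

/-- The normed hexablock `ℍ_N`. -/
def hexN : Set (ℂ × ℂ × ℂ × ℂ) :=
  {q | ∃ A : Matrix (Fin 2) (Fin 2) ℂ, opNorm2 A < 1 ∧ piMap A = q}

/-- `ℍ_p = π(𝒰(2))`. -/
def hexP : Set (ℂ × ℂ × ℂ × ℂ) :=
  {q | ∃ U : Matrix (Fin 2) (Fin 2) ℂ, U ∈ Matrix.unitaryGroup (Fin 2) ℂ ∧ piMap U = q}

/-- Evaluation of a polynomial in four variables at a point of `ℂ⁴`. -/
def evalPoly4 (p : MvPolynomial (Fin 4) ℂ) (q : ℂ × ℂ × ℂ × ℂ) : ℂ :=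
  MvPolynomial.eval ![q.1, q.2.1, q.2.2.1, q.2.2.2] p

/-- Polynomial convexity of a subset of `ℂ⁴`. -/
def PolyConvex (K : Set (ℂ × ℂ × ℂ × ℂ)) : Prop :=
  ∀ z ∉ K, ∃ p : MvPolynomial (Fin 4) ℂ,
    (∀ w ∈ K, ‖evalPoly4 p w‖ ≤ 1) ∧ 1 < ‖evalPoly4 p z‖

/-- Polynomial convex hull of a subset of `ℂ⁴`. -/
def polyHull (K : Set (ℂ × ℂ × ℂ × ℂ)) : Set (ℂ × ℂ × ℂ × ℂ) :=
  {z | ∀ p : MvPolynomial (Fin 4) ℂ,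
    ‖evalPoly4 p z‖ ≤ sSup {r : ℝ | ∃ w ∈ K, r = ‖evalPoly4 p w‖}}

/-- The pentablock `𝒫 ⊆ ℂ³`. -/
def pentablock : Set (ℂ × ℂ × ℂ) :=
  {q | ∃ A : Matrix (Fin 2) (Fin 2) ℂ, opNorm2 A < 1 ∧ (A 1 0, A 0 0 + A 1 1, A.det) = q}

/-!
A `2 × 2` matrix `A` is a contraction iff the Hermitian matrix `1 - Aᴴ A` is positive
semidefinite, i.e. iff its trace `2 - ‖A‖²_F` and its determinant `1 - ‖A‖²_F + |det A|²` are
nonnegative (`‖·‖_F` the Frobenius norm). The closed unit ball of `M₂(ℂ)` is compact and is the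
closure of the open one, so `closure ℍ_N = π(closed ball)`. Writing `A = [[x₁, b], [a, x₂]]` we
have `x₃ = x₁ x₂ - a b`, hence `|a| |b| = δ`, and the determinant condition reads
`|a|² + |b|² ≤ β`; for `a ≠ 0` this is the quadratic inequality `|a|⁴ - β |a|² + δ² ≤ 0`, whose
solution set is the stated interval. Points of `closure 𝔼` satisfy `|x₃| ≤ 1` and `2 δ ≤ β`,
which is exactly what is needed to build such a contraction. These bounds come from
`|x₁ - x₃ ω| ≤ |1 - x₂ ω|` for `|ω| = 1`: otherwise `z₁ = (1 - x₂ ω) / (x₁ - x₃ ω)` would be a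
zero of `hexDen x · ω` in the closed disc.
-/

open scoped Matrix.Norms.L2Operator ComplexConjugate

lemma hermitian_form_nonneg_iff (p r : ℝ) (q : ℂ) :
    (∀ v₁ v₂ : ℂ, 0 ≤ p * ‖v₁‖ ^ 2 + r * ‖v₂‖ ^ 2 - 2 * (q * v₁ * conj v₂).re) ↔
      0 ≤ p + r ∧ ‖q‖ ^ 2 ≤ p * r := by
  constructor
  · intro h
    have hp : 0 ≤ p := by simpa using h 1 0
    have hr : 0 ≤ r := by simpa using h 0 1
    have hdisc : discrim (r * ‖q‖ ^ 2) (-2 * ‖q‖ ^ 2) p ≤ 0 := by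
      refine discrim_le_zero fun t => ?_
      have e : (q * 1 * conj ((t : ℂ) * q)).re = t * ‖q‖ ^ 2 := by
        rw [mul_one, map_mul, Complex.conj_ofReal, mul_left_comm, Complex.mul_conj,
          Complex.normSq_eq_norm_sq, Complex.re_ofReal_mul, Complex.ofReal_re]
      have := h 1 ((t : ℂ) * q)
      rw [e, norm_one, norm_mul, Complex.norm_real, Real.norm_eq_abs, mul_pow, sq_abs] at this
      linear_combination this
    rw [discrim] at hdisc
    refine ⟨by linarith, ?_⟩
    nlinarith [mul_nonneg hp hr, sq_nonneg ‖q‖]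
  · rintro ⟨hsum, hq⟩ v₁ v₂
    have hp : 0 ≤ p := by nlinarith [sq_nonneg ‖q‖]
    have hr : 0 ≤ r := by nlinarith [sq_nonneg ‖q‖]
    have hre : (q * v₁ * conj v₂).re ≤ ‖q‖ * ‖v₁‖ * ‖v₂‖ := by
      simpa using Complex.re_le_norm (q * v₁ * conj v₂)
    have hamgm : 2 * (‖q‖ * ‖v₁‖ * ‖v₂‖) ≤ p * ‖v₁‖ ^ 2 + r * ‖v₂‖ ^ 2 :=
      two_mul_le_add_of_sq_le_mul (by positivity) (by positivity)
        (by nlinarith [mul_le_mul_of_nonneg_right hq (by positivity : 0 ≤ ‖v₁‖ ^ 2 * ‖v₂‖ ^ 2)])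
    linarith

lemma norm_sq_sub_norm_sq_mulVec_fin_two (a b c d v₁ v₂ : ℂ) :
    ‖v₁‖ ^ 2 + ‖v₂‖ ^ 2 - (‖a * v₁ + b * v₂‖ ^ 2 + ‖c * v₁ + d * v₂‖ ^ 2)
      = (1 - ‖a‖ ^ 2 - ‖c‖ ^ 2) * ‖v₁‖ ^ 2 + (1 - ‖b‖ ^ 2 - ‖d‖ ^ 2) * ‖v₂‖ ^ 2
        - 2 * ((a * conj b + c * conj d) * v₁ * conj v₂).re := by
  simp only [Complex.sq_norm, Complex.normSq_apply, Complex.add_re, Complex.add_im,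
    Complex.mul_re, Complex.mul_im, Complex.conj_re, Complex.conj_im]
  ring

/-- With `A = !![a, b; c, d]`, the left side is the determinant of `1 - Aᴴ A`. -/
lemma det_one_sub_gram_fin_two (a b c d : ℂ) :
    (1 - ‖a‖ ^ 2 - ‖c‖ ^ 2) * (1 - ‖b‖ ^ 2 - ‖d‖ ^ 2) - ‖a * conj b + c * conj d‖ ^ 2
      = 1 - (‖a‖ ^ 2 + ‖b‖ ^ 2 + ‖c‖ ^ 2 + ‖d‖ ^ 2) + ‖a * d - b * c‖ ^ 2 := by
  simp only [Complex.sq_norm, Complex.normSq_apply, Complex.add_re, Complex.add_im,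
    Complex.sub_re, Complex.sub_im, Complex.mul_re, Complex.mul_im, Complex.conj_re,
    Complex.conj_im]
  ring

namespace Matrix

lemma det_one_sub_ne_zero_of_norm_lt_one {n 𝕜 : Type*} [RCLike 𝕜] [Fintype n]
    [DecidableEq n] {M : Matrix n n 𝕜} (hM : ‖M‖ < 1) : (1 - M).det ≠ 0 :=
  ((isUnit_iff_isUnit_det _).mp (Units.oneSub M hM).isUnit).ne_zero

lemma norm_le_one_iff_forall_fin_two (A : Matrix (Fin 2) (Fin 2) ℂ) :
    ‖A‖ ≤ 1 ↔ ∀ v₁ v₂ : ℂ,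
      ‖A 0 0 * v₁ + A 0 1 * v₂‖ ^ 2 + ‖A 1 0 * v₁ + A 1 1 * v₂‖ ^ 2 ≤ ‖v₁‖ ^ 2 + ‖v₂‖ ^ 2 := by
  have hv (v : EuclideanSpace ℂ (Fin 2)) : ‖toEuclideanCLM (𝕜 := ℂ) A v‖ ^ 2
      = ‖A 0 0 * v 0 + A 0 1 * v 1‖ ^ 2 + ‖A 1 0 * v 0 + A 1 1 * v 1‖ ^ 2 := by
    simp [EuclideanSpace.norm_sq_eq, Fin.sum_univ_two, mulVec, dotProduct]
  have hle (v : EuclideanSpace ℂ (Fin 2)) : ‖toEuclideanCLM (𝕜 := ℂ) A v‖ ≤ 1 * ‖v‖ ↔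
      ‖A 0 0 * v 0 + A 0 1 * v 1‖ ^ 2 + ‖A 1 0 * v 0 + A 1 1 * v 1‖ ^ 2
        ≤ ‖v 0‖ ^ 2 + ‖v 1‖ ^ 2 := by
    rw [one_mul, ← sq_le_sq₀ (norm_nonneg _) (norm_nonneg _), hv, EuclideanSpace.norm_sq_eq,
      Fin.sum_univ_two]
  rw [cstar_norm_def, ContinuousLinearMap.opNorm_le_iff zero_le_one]
  simp_rw [hle]
  exact ⟨fun h v₁ v₂ => by simpa using h !₂[v₁, v₂], fun h v => h (v 0) (v 1)⟩

lemma norm_le_one_iff_fin_two (A : Matrix (Fin 2) (Fin 2) ℂ) :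
    ‖A‖ ≤ 1 ↔ ‖A 0 0‖ ^ 2 + ‖A 0 1‖ ^ 2 + ‖A 1 0‖ ^ 2 + ‖A 1 1‖ ^ 2 ≤ 2 ∧
      ‖A 0 0‖ ^ 2 + ‖A 0 1‖ ^ 2 + ‖A 1 0‖ ^ 2 + ‖A 1 1‖ ^ 2 ≤ 1 + ‖A.det‖ ^ 2 := by
  have hform := hermitian_form_nonneg_iff (1 - ‖A 0 0‖ ^ 2 - ‖A 1 0‖ ^ 2)
    (1 - ‖A 0 1‖ ^ 2 - ‖A 1 1‖ ^ 2) (A 0 0 * conj (A 0 1) + A 1 0 * conj (A 1 1))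
  simp only [← norm_sq_sub_norm_sq_mulVec_fin_two, sub_nonneg] at hform
  rw [norm_le_one_iff_forall_fin_two, hform, det_fin_two]
  have := det_one_sub_gram_fin_two (A 0 0) (A 0 1) (A 1 0) (A 1 1)
  constructor <;> rintro ⟨h₁, h₂⟩ <;> constructor <;> linarith

lemma norm_fin_two_of_le_one_iff {x₁ x₂ a b : ℂ} (hdet : ‖x₁ * x₂ - b * a‖ ≤ 1) :
    ‖!![x₁, b; a, x₂]‖ ≤ 1 ↔
      ‖a‖ ^ 2 + ‖b‖ ^ 2 ≤ 1 - ‖x₁‖ ^ 2 - ‖x₂‖ ^ 2 + ‖x₁ * x₂ - b * a‖ ^ 2 := by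
  rw [norm_le_one_iff_fin_two]
  simp only [of_apply, cons_val', cons_val_zero, cons_val_one, empty_val', cons_val_fin_one,
    det_fin_two_of]
  have := pow_le_one₀ (n := 2) (norm_nonneg _) hdet
  constructor
  · rintro ⟨-, h⟩; linarith
  · intro h; constructor <;> linarith

end Matrix

lemma closure_image_ball_eq_image_closedBall {E Y : Type*} [SeminormedAddCommGroup E]
    [NormedSpace ℝ E] [ProperSpace E] [TopologicalSpace Y] [T2Space Y] {f : E → Y}
    (hf : Continuous f) (x : E) {r : ℝ} (hr : r ≠ 0) :
    closure (f '' Metric.ball x r) = f '' Metric.closedBall x r :=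
  (closure_minimal (Set.image_mono Metric.ball_subset_closedBall)
    ((isCompact_closedBall x r).image hf).isClosed).antisymm
    (closure_ball x hr ▸ image_closure_subset_closure_image hf)

lemma opNorm2_eq_norm (A : Matrix (Fin 2) (Fin 2) ℂ) : opNorm2 A = ‖A‖ := rfl

lemma continuous_piMap : Continuous piMap := by
  unfold piMap; fun_prop

lemma closure_hexN :
    closure hexN = {q | ∃ A : Matrix (Fin 2) (Fin 2) ℂ, opNorm2 A ≤ 1 ∧ piMap A = q} := by
  have hball : hexN = piMap '' Metric.ball 0 1 := by
    ext q; simp [hexN, opNorm2_eq_norm]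
  rw [hball, closure_image_ball_eq_image_closedBall continuous_piMap 0 one_ne_zero]
  ext q; simp [opNorm2_eq_norm]

lemma hexDen_eq_det_one_sub_mul_diagonal (A : Matrix (Fin 2) (Fin 2) ℂ) (z₁ z₂ : ℂ) :
    hexDen (A 0 0, A 1 1, A.det) z₁ z₂ = (1 - A * Matrix.diagonal ![z₁, z₂]).det := by
  simp [hexDen, Matrix.det_fin_two]
  ring

lemma mem_tetrablock_of_norm_lt_one {A : Matrix (Fin 2) (Fin 2) ℂ} (hA : ‖A‖ < 1) :
    (A 0 0, A 1 1, A.det) ∈ tetrablock := by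
  intro z₁ z₂ hz₁ hz₂
  have hD : ‖Matrix.diagonal ![z₁, z₂]‖ ≤ 1 := by
    rw [Matrix.l2_opNorm_diagonal, pi_norm_le_iff_of_nonneg zero_le_one]
    simp [Fin.forall_fin_two, hz₁, hz₂]
  rw [hexDen_eq_det_one_sub_mul_diagonal]
  refine Matrix.det_one_sub_ne_zero_of_norm_lt_one ((norm_mul_le _ _).trans_lt ?_)
  nlinarith [norm_nonneg A]

lemma mem_closure_tetrablock_of_norm_le_one {A : Matrix (Fin 2) (Fin 2) ℂ} (hA : ‖A‖ ≤ 1) :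
    (A 0 0, A 1 1, A.det) ∈ closure tetrablock :=
  map_mem_closure (f := fun B : Matrix (Fin 2) (Fin 2) ℂ => (B 0 0, B 1 1, B.det))
    (by fun_prop) (closure_ball (0 : Matrix (Fin 2) (Fin 2) ℂ) one_ne_zero ▸
      mem_closedBall_zero_iff.mpr hA)
    fun _ hB => mem_tetrablock_of_norm_lt_one (mem_ball_zero_iff.mp hB)

lemma norm_mul_sub_sq_eq (x₁ x₂ x₃ : ℂ) :
    ‖x₁ * x₂ - x₃‖ ^ 2 = ‖x₂ - conj x₁ * x₃‖ ^ 2 - (1 - ‖x₁‖ ^ 2) * (‖x₂‖ ^ 2 - ‖x₃‖ ^ 2) := by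
  simp only [Complex.sq_norm, Complex.normSq_apply, Complex.sub_re, Complex.sub_im,
    Complex.mul_re, Complex.mul_im, Complex.conj_re, Complex.conj_im]
  ring

section Tetrablock

variable {x₁ x₂ x₃ : ℂ}

lemma mem_tetrablock_swap (hx : (x₁, x₂, x₃) ∈ tetrablock) : (x₂, x₁, x₃) ∈ tetrablock :=
  fun z₁ z₂ hz₁ hz₂ => by
    convert hx z₂ z₁ hz₂ hz₁ using 1
    simp only [hexDen]; ring

lemma norm_le_one_of_mem_tetrablock (hx : (x₁, x₂, x₃) ∈ tetrablock) : ‖x₁‖ ≤ 1 := by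
  by_contra! h
  have hx₁ : x₁ ≠ 0 := norm_pos_iff.mp (one_pos.trans h)
  refine hx x₁⁻¹ 0 (by rw [norm_inv]; exact inv_le_one_of_one_le₀ h.le) (by simp) ?_
  simp [hexDen, hx₁]

lemma norm_sub_mul_le_of_mem_tetrablock (hx : (x₁, x₂, x₃) ∈ tetrablock) {ω : ℂ}
    (hω : ‖ω‖ = 1) : ‖x₁ - x₃ * ω‖ ≤ ‖1 - x₂ * ω‖ := by
  by_contra! h
  have hne : x₁ - x₃ * ω ≠ 0 := norm_pos_iff.mp ((norm_nonneg _).trans_lt h)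
  refine hx ((1 - x₂ * ω) / (x₁ - x₃ * ω)) ω ?_ hω.le ?_
  · rw [norm_div]; exact div_le_one_of_le₀ h.le (norm_nonneg _)
  · have hcancel := mul_div_cancel₀ (1 - x₂ * ω) hne
    simp only [hexDen]
    linear_combination (-1 : ℂ) * hcancel

lemma two_mul_norm_sub_conj_mul_le_of_mem_tetrablock (hx : (x₁, x₂, x₃) ∈ tetrablock) :
    2 * ‖x₂ - conj x₁ * x₃‖ ≤ 1 + ‖x₂‖ ^ 2 - ‖x₁‖ ^ 2 - ‖x₃‖ ^ 2 := by
  obtain ⟨ω, hω, hw⟩ := Complex.exists_norm_eq_mul_self (x₂ - conj x₁ * x₃)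
  have hsq := pow_le_pow_left₀ (norm_nonneg _) (norm_sub_mul_le_of_mem_tetrablock hx hω) 2
  have hω' : ω.re * ω.re + ω.im * ω.im = 1 := by
    rw [← Complex.normSq_apply, Complex.normSq_eq_norm_sq, hω, one_pow]
  have hre := congrArg Complex.re hw
  simp only [Complex.ofReal_re] at hre
  simp only [Complex.sq_norm, Complex.normSq_apply, Complex.sub_re, Complex.sub_im,
    Complex.mul_re, Complex.mul_im, Complex.one_re, Complex.one_im, Complex.conj_re,
    Complex.conj_im] at hsq hre ⊢
  nlinarith

lemma tetrablock_bounds (hx : (x₁, x₂, x₃) ∈ tetrablock) :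
    ‖x₃‖ ≤ 1 ∧ 2 * ‖x₁ * x₂ - x₃‖ ≤ 1 - ‖x₁‖ ^ 2 - ‖x₂‖ ^ 2 + ‖x₃‖ ^ 2 := by
  have hs := norm_le_one_of_mem_tetrablock (mem_tetrablock_swap hx)
  have hv := two_mul_norm_sub_conj_mul_le_of_mem_tetrablock hx
  have hu := two_mul_norm_sub_conj_mul_le_of_mem_tetrablock (mem_tetrablock_swap hx)
  have hv' : |‖x₂‖ - ‖x₁‖ * ‖x₃‖| ≤ ‖x₂ - conj x₁ * x₃‖ := by
    simpa using abs_norm_sub_norm_le x₂ (conj x₁ * x₃)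
  have hu' : |‖x₁‖ - ‖x₂‖ * ‖x₃‖| ≤ ‖x₁ - conj x₂ * x₃‖ := by
    simpa using abs_norm_sub_norm_le x₁ (conj x₂ * x₃)
  have hδ := norm_mul_sub_sq_eq x₁ x₂ x₃
  set r := ‖x₁‖
  set s := ‖x₂‖
  set t := ‖x₃‖
  obtain ⟨hv₁, hv₂⟩ := abs_le.mp hv'
  obtain ⟨hu₁, -⟩ := abs_le.mp hu'
  have hrt : r + t ≤ 1 + s := by nlinarith [norm_nonneg x₁, norm_nonneg x₂, norm_nonneg x₃]
  have hst : s + t ≤ 1 + r := by nlinarith [norm_nonneg x₁, norm_nonneg x₂, norm_nonneg x₃]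
  have hrt' : r - t ≤ 1 - s :=
    (le_abs_self _).trans (abs_le_of_sq_le_sq (by nlinarith) (by linarith))
  -- `r² - t² = (r - t) (r + t) ≤ (1 - s) (1 + s) = 1 - s²`
  have hβ : 0 ≤ 1 - r ^ 2 - s ^ 2 + t ^ 2 := by
    nlinarith [mul_le_mul hrt' hrt (by positivity) (by linarith)]
  have hvsq : (2 * ‖x₂ - conj x₁ * x₃‖) ^ 2 ≤ (1 + s ^ 2 - r ^ 2 - t ^ 2) ^ 2 :=
    pow_le_pow_left₀ (by positivity) hv 2
  refine ⟨by linarith, abs_le_of_sq_le_sq' ?_ hβ |>.2⟩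
  -- `(2δ)² = (2v)² - 4 (1 - r²) (s² - t²) ≤ (1 + s² - r² - t²)² - 4 (1 - r²) (s² - t²) = β²`,
  -- where `v = ‖x₂ - conj x₁ * x₃‖`
  nlinarith

lemma closure_tetrablock_bounds (hx : (x₁, x₂, x₃) ∈ closure tetrablock) :
    ‖x₃‖ ≤ 1 ∧ 2 * ‖x₁ * x₂ - x₃‖ ≤ 1 - ‖x₁‖ ^ 2 - ‖x₂‖ ^ 2 + ‖x₃‖ ^ 2 := by
  have hsub : tetrablock ⊆ {y : ℂ × ℂ × ℂ | ‖y.2.2‖ ≤ 1 ∧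
      2 * ‖y.1 * y.2.1 - y.2.2‖ ≤ 1 - ‖y.1‖ ^ 2 - ‖y.2.1‖ ^ 2 + ‖y.2.2‖ ^ 2} :=
    fun _ hy => tetrablock_bounds hy
  refine closure_minimal hsub ?_ hx
  simp only [Set.ofPred_and]
  exact (isClosed_le (by fun_prop) (by fun_prop)).inter (isClosed_le (by fun_prop) (by fun_prop))

end Tetrablock

lemma sub_sqrt_le_and_le_add_sqrt_iff {α γ β : ℝ} (hα : 0 < α) (hD : 4 * (α * γ) ≤ β ^ 2) :
    (β - √(β ^ 2 - 4 * (α * γ)) ≤ 2 * α ∧ 2 * α ≤ β + √(β ^ 2 - 4 * (α * γ))) ↔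
      α + γ ≤ β := by
  have habs : (β - √(β ^ 2 - 4 * (α * γ)) ≤ 2 * α ∧ 2 * α ≤ β + √(β ^ 2 - 4 * (α * γ))) ↔
      |2 * α - β| ≤ √(β ^ 2 - 4 * (α * γ)) := by
    rw [abs_le]; constructor <;> rintro ⟨h₁, h₂⟩ <;> constructor <;> linarith
  rw [habs, Real.le_sqrt (abs_nonneg _) (by linarith), sq_abs]
  constructor <;> intro h <;> nlinarith

lemma exists_sub_mul_eq_and_add_le_iff {a p x₃ : ℂ} {β : ℝ} (hβ : 2 * ‖p - x₃‖ ≤ β) :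
    (∃ b : ℂ, p - b * a = x₃ ∧ ‖a‖ ^ 2 + ‖b‖ ^ 2 ≤ β) ↔
      (a = 0 ∧ x₃ = p) ∨
        (a ≠ 0 ∧ β - √(β ^ 2 - 4 * ‖p - x₃‖ ^ 2) ≤ 2 * ‖a‖ ^ 2 ∧
          2 * ‖a‖ ^ 2 ≤ β + √(β ^ 2 - 4 * ‖p - x₃‖ ^ 2)) := by
  have hD : 4 * ‖p - x₃‖ ^ 2 ≤ β ^ 2 := by nlinarith [norm_nonneg (p - x₃)]
  constructor
  · rintro ⟨b, rfl, h⟩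
    rcases eq_or_ne a 0 with ha | ha
    · exact Or.inl ⟨ha, by simp [ha]⟩
    · rw [sub_sub_cancel, mul_comm b a, norm_mul, mul_pow] at hD ⊢
      exact Or.inr ⟨ha, (sub_sqrt_le_and_le_add_sqrt_iff (by positivity) hD).mpr h⟩
  · rintro (⟨rfl, rfl⟩ | ⟨ha, h⟩)
    · exact ⟨0, by simp, by simpa using hβ⟩
    · set b := (p - x₃) / a
      have hb : p - b * a = x₃ := by simp [b, ha]
      rw [← hb, sub_sub_cancel, mul_comm b a, norm_mul, mul_pow] at hD h
      exact ⟨b, hb, (sub_sqrt_le_and_le_add_sqrt_iff (by positivity) hD).mp h⟩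

lemma exists_norm_le_one_piMap_eq_iff (a x₁ x₂ x₃ : ℂ) :
    (∃ A : Matrix (Fin 2) (Fin 2) ℂ, ‖A‖ ≤ 1 ∧ piMap A = (a, x₁, x₂, x₃)) ↔
      ∃ b : ℂ, ‖!![x₁, b; a, x₂]‖ ≤ 1 ∧ x₁ * x₂ - b * a = x₃ := by
  constructor
  · rintro ⟨A, hA, hπ⟩
    simp only [piMap, Prod.mk.injEq] at hπ
    obtain ⟨rfl, rfl, rfl, rfl⟩ := hπ
    exact ⟨A 0 1, by rwa [← Matrix.eta_fin_two A], (Matrix.det_fin_two A).symm⟩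
  · rintro ⟨b, hA, rfl⟩
    exact ⟨_, hA, by simp [piMap, Matrix.det_fin_two_of]⟩

/-- Description of `closure ℍ_N`. -/
theorem stmt10 :
    closure hexN
      = {q : ℂ × ℂ × ℂ × ℂ | ∃ A : Matrix (Fin 2) (Fin 2) ℂ,
          opNorm2 A ≤ 1 ∧ piMap A = q} ∧
    (∀ a x₁ x₂ x₃ : ℂ,
      (a, x₁, x₂, x₃) ∈ closure hexN ↔
        ((x₁, x₂, x₃) ∈ closure tetrablock ∧
          ((a = 0 ∧ x₃ = x₁ * x₂) ∨
            (a ≠ 0 ∧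
              (1 - ‖x₁‖ ^ 2 - ‖x₂‖ ^ 2 + ‖x₃‖ ^ 2) -
                  Real.sqrt ((1 - ‖x₁‖ ^ 2 - ‖x₂‖ ^ 2 + ‖x₃‖ ^ 2) ^ 2
                    - 4 * ‖x₁ * x₂ - x₃‖ ^ 2)
                ≤ 2 * ‖a‖ ^ 2 ∧
              2 * ‖a‖ ^ 2 ≤
                (1 - ‖x₁‖ ^ 2 - ‖x₂‖ ^ 2 + ‖x₃‖ ^ 2) +
                  Real.sqrt ((1 - ‖x₁‖ ^ 2 - ‖x₂‖ ^ 2 + ‖x₃‖ ^ 2) ^ 2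
                    - 4 * ‖x₁ * x₂ - x₃‖ ^ 2))))) := by
  refine ⟨closure_hexN, fun a x₁ x₂ x₃ => ?_⟩
  simp only [closure_hexN, opNorm2_eq_norm, Set.mem_ofPred_eq, exists_norm_le_one_piMap_eq_iff]
  constructor
  · rintro ⟨b, hA, rfl⟩
    have hx : (x₁, x₂, x₁ * x₂ - b * a) ∈ closure tetrablock := by
      simpa [Matrix.det_fin_two_of] using mem_closure_tetrablock_of_norm_le_one hA
    obtain ⟨hdet, hβ⟩ := closure_tetrablock_bounds hx
    exact ⟨hx, (exists_sub_mul_eq_and_add_le_iff hβ).mp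
      ⟨b, rfl, (Matrix.norm_fin_two_of_le_one_iff hdet).mp hA⟩⟩
  · rintro ⟨hx, h⟩
    obtain ⟨hdet, hβ⟩ := closure_tetrablock_bounds hx
    obtain ⟨b, rfl, hb⟩ := (exists_sub_mul_eq_and_add_le_iff hβ).mpr h
    exact ⟨b, (Matrix.norm_fin_two_of_le_one_iff hdet).mpr hb, rfl⟩
end
end

section
/- If (a, x₁, x₂, x₃) ∈ closure(ℍ) then |a|² + |x₁|² ≤ 1 and |a|² + |x₂|² ≤ 1; if moreover (a, x₁, x₂, x₃) ∈ ℍ then |a|² + |x₁|² < 1. Furthermore, for (x₁, x₂, x₃) ∈ b𝔼 and a ∈ ℂ, one has (a, x₁, x₂, x₃) ∈ closure(ℍ) if and only if |a|² + |x₁|² ≤ 1. -/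
noncomputable section

open Complex

/-!
Testing `ψ` at `(z₁, z₂) = (x̄₁, 0)` gives `|ψ| = |a| / √(1 - |x₁|²)`, so `|a|² + |x₁|² < 1` on `ℍ`,
and likewise with `(0, x̄₂)`; the non-strict bounds pass to the closure.

Conversely, a point of `b𝔼` has the form `(β̄τ, β, τ)` with `|β| ≤ 1`, `|τ| = 1`, and then
`1 - x₁w₁ - x₂w₂ + x₃w₁w₂ = (1 - βw₂) - τw₁(β̄ - w₂)`. Since
`|1 - βw₂|² - |β̄ - w₂|² = (1 - |β|²)(1 - |w₂|²)`, its modulus is at least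
`√((1 - |β|²)(1 - |w₁|²)(1 - |w₂|²))`. Hence, when `|a|² + |β|² ≤ 1`, the points
`(ta, tx₁, tx₂, t²x₃)` with `0 ≤ t < 1` lie in `ℍ`, and they tend to `(a, x)` as `t → 1`.
-/

open Filter Topology ComplexConjugate

lemma norm_psi (z₁ z₂ : ℂ) (q : ℂ × ℂ × ℂ × ℂ) :
    ‖psi z₁ z₂ q‖ = ‖q.1‖ * √((1 - ‖z₁‖ ^ 2) * (1 - ‖z₂‖ ^ 2)) / ‖hexDen q.2 z₁ z₂‖ := by
  rw [psi, norm_div, norm_mul, Complex.norm_of_nonneg (Real.sqrt_nonneg _)]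

lemma norm_psi_le {z₁ z₂ : ℂ} {q : ℂ × ℂ × ℂ × ℂ} {c : ℝ} (hc : 0 ≤ c)
    (h : ‖q.1‖ ^ 2 * ((1 - ‖z₁‖ ^ 2) * (1 - ‖z₂‖ ^ 2)) ≤ (c * ‖hexDen q.2 z₁ z₂‖) ^ 2) :
    ‖psi z₁ z₂ q‖ ≤ c := by
  rw [norm_psi]
  rcases (norm_nonneg (hexDen q.2 z₁ z₂)).eq_or_lt with hD | hD
  · rw [← hD, div_zero]; exact hc
  rw [div_le_iff₀ hD, ← Real.sqrt_sq (norm_nonneg q.1), ← Real.sqrt_mul (sq_nonneg _),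
    ← Real.sqrt_sq (by positivity : 0 ≤ c * ‖hexDen q.2 z₁ z₂‖)]
  exact Real.sqrt_le_sqrt h

lemma norm_fst_lt_one_of_mem_tetrablock {x : ℂ × ℂ × ℂ} (hx : x ∈ tetrablock) : ‖x.1‖ < 1 := by
  by_contra! h
  have hx₁ : x.1 ≠ 0 := norm_pos_iff.1 (one_pos.trans_le h)
  refine hx x.1⁻¹ 0 (by rw [norm_inv]; exact inv_le_one_of_one_le₀ h) (by simp) ?_
  simp [hexDen, hx₁]

lemma norm_snd_lt_one_of_mem_tetrablock {x : ℂ × ℂ × ℂ} (hx : x ∈ tetrablock) :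
    ‖x.2.1‖ < 1 := by
  by_contra! h
  have hx₂ : x.2.1 ≠ 0 := norm_pos_iff.1 (one_pos.trans_le h)
  refine hx 0 x.2.1⁻¹ (by simp) (by rw [norm_inv]; exact inv_le_one_of_one_le₀ h) ?_
  simp [hexDen, hx₂]

lemma bddAbove_norm_psi {q : ℂ × ℂ × ℂ × ℂ} (hq : q.2 ∈ tetrablock) :
    BddAbove {r : ℝ | ∃ z₁ z₂ : ℂ, ‖z₁‖ < 1 ∧ ‖z₂‖ < 1 ∧ r = ‖psi z₁ z₂ q‖} := by
  set K := Metric.closedBall (0 : ℂ) 1 ×ˢ Metric.closedBall (0 : ℂ) 1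
  have hcont : ContinuousOn (fun z : ℂ × ℂ => ‖psi z.1 z.2 q‖) K := by
    refine (ContinuousOn.div (by fun_prop) (by unfold hexDen; fun_prop) ?_).norm
    rintro z ⟨hz₁, hz₂⟩
    exact hq z.1 z.2 (mem_closedBall_zero_iff.1 hz₁) (mem_closedBall_zero_iff.1 hz₂)
  refine (((isCompact_closedBall _ _).prod (isCompact_closedBall _ _)).bddAbove_image hcont).mono ?_
  rintro r ⟨z₁, z₂, hz₁, hz₂, rfl⟩
  exact ⟨(z₁, z₂), ⟨mem_closedBall_zero_iff.2 hz₁.le, mem_closedBall_zero_iff.2 hz₂.le⟩, rfl⟩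

lemma sq_norm_fst_lt_of_mem_hexablock {q : ℂ × ℂ × ℂ × ℂ} (hq : q ∈ hexablock) {z₁ z₂ : ℂ}
    (hz₁ : ‖z₁‖ < 1) (hz₂ : ‖z₂‖ < 1)
    (hD : hexDen q.2 z₁ z₂ = ((1 - ‖z₁‖ ^ 2) * (1 - ‖z₂‖ ^ 2) : ℝ)) :
    ‖q.1‖ ^ 2 < (1 - ‖z₁‖ ^ 2) * (1 - ‖z₂‖ ^ 2) := by
  set P := (1 - ‖z₁‖ ^ 2) * (1 - ‖z₂‖ ^ 2)
  have hP : 0 < P := mul_pos (by nlinarith [norm_nonneg z₁]) (by nlinarith [norm_nonneg z₂])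
  have hψ : ‖psi z₁ z₂ q‖ < 1 :=
    (le_csSup (bddAbove_norm_psi hq.1) ⟨z₁, z₂, hz₁, hz₂, rfl⟩).trans_lt hq.2
  rw [norm_psi, hD, Complex.norm_of_nonneg hP.le, div_lt_one hP,
    ← Real.mul_self_sqrt hP.le] at hψ
  exact (Real.lt_sqrt (norm_nonneg _)).1 (lt_of_mul_lt_mul_right hψ (Real.sqrt_nonneg _))

lemma sq_norm_add_sq_norm_lt_one_of_mem_hexablock {q : ℂ × ℂ × ℂ × ℂ} (hq : q ∈ hexablock) :
    ‖q.1‖ ^ 2 + ‖q.2.1‖ ^ 2 < 1 ∧ ‖q.1‖ ^ 2 + ‖q.2.2.1‖ ^ 2 < 1 := by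
  have h₁ := norm_fst_lt_one_of_mem_tetrablock hq.1
  have h₂ := norm_snd_lt_one_of_mem_tetrablock hq.1
  constructor
  · have := sq_norm_fst_lt_of_mem_hexablock hq (z₁ := conj q.2.1) (z₂ := 0)
      (by rwa [norm_conj]) (by simp)
      (by simp [hexDen, mul_conj, normSq_eq_norm_sq])
    simp only [norm_conj, norm_zero] at this
    linarith
  · have := sq_norm_fst_lt_of_mem_hexablock hq (z₁ := 0) (z₂ := conj q.2.2.1)
      (by simp) (by rwa [norm_conj])
      (by simp [hexDen, mul_conj, normSq_eq_norm_sq])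
    simp only [norm_conj, norm_zero] at this
    linarith

lemma sq_norm_add_sq_norm_le_one_of_mem_closure_hexablock {q : ℂ × ℂ × ℂ × ℂ}
    (hq : q ∈ closure hexablock) :
    ‖q.1‖ ^ 2 + ‖q.2.1‖ ^ 2 ≤ 1 ∧ ‖q.1‖ ^ 2 + ‖q.2.2.1‖ ^ 2 ≤ 1 := by
  have hclosed : IsClosed
      {p : ℂ × ℂ × ℂ × ℂ | ‖p.1‖ ^ 2 + ‖p.2.1‖ ^ 2 ≤ 1 ∧ ‖p.1‖ ^ 2 + ‖p.2.2.1‖ ^ 2 ≤ 1} := by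
    rw [Set.ofPred_and]
    exact (isClosed_le (by fun_prop) continuous_const).inter
      (isClosed_le (by fun_prop) continuous_const)
  refine closure_minimal (fun p hp => ?_) hclosed hq
  have := sq_norm_add_sq_norm_lt_one_of_mem_hexablock hp
  exact ⟨this.1.le, this.2.le⟩

lemma sq_norm_one_sub_mul (β w : ℂ) :
    ‖1 - β * w‖ ^ 2 = ‖conj β - w‖ ^ 2 + (1 - ‖β‖ ^ 2) * (1 - ‖w‖ ^ 2) := by
  simp only [Complex.sq_norm, normSq_apply, sub_re, sub_im, one_re, one_im, mul_re, mul_im,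
    conj_re, conj_im]
  ring

lemma norm_conj_sub_le_norm_one_sub_mul {β w : ℂ} (hβ : ‖β‖ ≤ 1) (hw : ‖w‖ ≤ 1) :
    ‖conj β - w‖ ≤ ‖1 - β * w‖ := by
  rw [← sq_le_sq₀ (norm_nonneg _) (norm_nonneg _), sq_norm_one_sub_mul]
  have := mul_nonneg (sub_nonneg.2 (pow_le_one₀ (n := 2) (norm_nonneg β) hβ))
    (sub_nonneg.2 (pow_le_one₀ (n := 2) (norm_nonneg w) hw))
  linarith

lemma hexDen_scale (t : ℂ) (x : ℂ × ℂ × ℂ) (z₁ z₂ : ℂ) :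
    hexDen (t * x.1, t * x.2.1, t ^ 2 * x.2.2) z₁ z₂ = hexDen x (t * z₁) (t * z₂) := by
  simp only [hexDen]; ring

section DistinguishedBoundary

variable {x : ℂ × ℂ × ℂ} (hx : x ∈ bE) {w₁ w₂ : ℂ}
include hx

lemma norm_sub_le_norm_hexDen_of_mem_bE :
    ‖1 - x.2.1 * w₂‖ - ‖w₁‖ * ‖conj x.2.1 - w₂‖ ≤ ‖hexDen x w₁ w₂‖ := by
  obtain ⟨hx₁, hx₃, -⟩ := hx
  have hD : hexDen x w₁ w₂ = (1 - x.2.1 * w₂) - x.2.2 * w₁ * (conj x.2.1 - w₂) := by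
    rw [hexDen, hx₁]; ring
  rw [hD]
  refine le_trans ?_ (norm_sub_norm_le _ _)
  rw [norm_mul, norm_mul, hx₃, one_mul]

lemma hexDen_ne_zero_of_mem_bE (h₁ : ‖w₁‖ < 1) (h₂ : ‖w₂‖ < 1) : hexDen x w₁ w₂ ≠ 0 := by
  have hβ : ‖x.2.1‖ ≤ 1 := hx.2.2
  have hB := norm_conj_sub_le_norm_one_sub_mul hβ h₂.le
  have hA : 0 < ‖1 - x.2.1 * w₂‖ := by
    refine lt_of_lt_of_le ?_ (norm_sub_norm_le _ _)
    rw [norm_one, norm_mul]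
    nlinarith [norm_nonneg x.2.1, norm_nonneg w₂]
  rw [← norm_pos_iff]
  refine lt_of_lt_of_le ?_ (norm_sub_le_norm_hexDen_of_mem_bE hx)
  nlinarith [mul_le_mul_of_nonneg_left hB (norm_nonneg w₁)]

lemma sq_le_sq_norm_hexDen_of_mem_bE (h₁ : ‖w₁‖ ≤ 1) (h₂ : ‖w₂‖ ≤ 1) :
    (1 - ‖x.2.1‖ ^ 2) * ((1 - ‖w₁‖ ^ 2) * (1 - ‖w₂‖ ^ 2)) ≤ ‖hexDen x w₁ w₂‖ ^ 2 := by
  set A := ‖1 - x.2.1 * w₂‖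
  set B := ‖conj x.2.1 - w₂‖
  set r := ‖w₁‖
  have hBA : B ≤ A := norm_conj_sub_le_norm_one_sub_mul hx.2.2 h₂
  have hAB : 0 ≤ A - r * B := by nlinarith [norm_nonneg (conj x.2.1 - w₂), norm_nonneg w₁]
  have hid : (1 - ‖x.2.1‖ ^ 2) * (1 - ‖w₂‖ ^ 2) = A ^ 2 - B ^ 2 := by
    rw [sq_norm_one_sub_mul]; ring
  calc (1 - ‖x.2.1‖ ^ 2) * ((1 - r ^ 2) * (1 - ‖w₂‖ ^ 2))
      = (A - r * B) ^ 2 - (r * A - B) ^ 2 := by linear_combination (1 - r ^ 2) * hid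
    _ ≤ (A - r * B) ^ 2 := by nlinarith [sq_nonneg (r * A - B)]
    _ ≤ ‖hexDen x w₁ w₂‖ ^ 2 := pow_le_pow_left₀ hAB (norm_sub_le_norm_hexDen_of_mem_bE hx) 2

lemma scale_mem_hexablock {a : ℂ} (ha : ‖a‖ ^ 2 + ‖x.1‖ ^ 2 ≤ 1) {t : ℝ} (ht₀ : 0 ≤ t)
    (ht₁ : t < 1) :
    ((t : ℂ) * a, (t : ℂ) * x.1, (t : ℂ) * x.2.1, (t : ℂ) ^ 2 * x.2.2) ∈ hexablock := by
  have hscale : ∀ z : ℂ, ‖(t : ℂ) * z‖ = t * ‖z‖ := fun z => by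
    rw [norm_mul, Complex.norm_of_nonneg ht₀]
  have ha' : ‖a‖ ^ 2 ≤ 1 - ‖x.2.1‖ ^ 2 := by
    rw [hx.1, norm_mul, norm_conj, hx.2.1, mul_one] at ha; linarith
  refine ⟨fun z₁ z₂ hz₁ hz₂ => ?_, (Real.sSup_le ?_ ht₀).trans_lt ht₁⟩
  · rw [hexDen_scale]
    exact hexDen_ne_zero_of_mem_bE hx (by rw [hscale]; nlinarith [norm_nonneg z₁])
      (by rw [hscale]; nlinarith [norm_nonneg z₂])
  rintro r ⟨z₁, z₂, hz₁, hz₂, rfl⟩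
  refine norm_psi_le ht₀ ?_
  have hw₁ : ‖(t : ℂ) * z₁‖ ≤ ‖z₁‖ := by rw [hscale]; nlinarith [norm_nonneg z₁]
  have hw₂ : ‖(t : ℂ) * z₂‖ ≤ ‖z₂‖ := by rw [hscale]; nlinarith [norm_nonneg z₂]
  have hP : (1 - ‖z₁‖ ^ 2) * (1 - ‖z₂‖ ^ 2)
      ≤ (1 - ‖(t : ℂ) * z₁‖ ^ 2) * (1 - ‖(t : ℂ) * z₂‖ ^ 2) := by
    have : 0 ≤ 1 - ‖z₂‖ ^ 2 := by nlinarith [norm_nonneg z₂]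
    gcongr
    nlinarith [norm_nonneg ((t : ℂ) * z₁)]
  have hD := sq_le_sq_norm_hexDen_of_mem_bE hx (hw₁.trans hz₁.le) (hw₂.trans hz₂.le)
  rw [hexDen_scale, mul_pow, hscale, mul_pow, mul_assoc]
  gcongr
  calc ‖a‖ ^ 2 * ((1 - ‖z₁‖ ^ 2) * (1 - ‖z₂‖ ^ 2))
      ≤ (1 - ‖x.2.1‖ ^ 2) * ((1 - ‖(t : ℂ) * z₁‖ ^ 2) * (1 - ‖(t : ℂ) * z₂‖ ^ 2)) :=
        mul_le_mul ha' hP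
          (mul_nonneg (by nlinarith [norm_nonneg z₁]) (by nlinarith [norm_nonneg z₂]))
          (by linarith [sq_nonneg ‖a‖])
    _ ≤ _ := hD

lemma mem_closure_hexablock_of_mem_bE {a : ℂ} (ha : ‖a‖ ^ 2 + ‖x.1‖ ^ 2 ≤ 1) :
    (a, x) ∈ closure hexablock := by
  set f := fun t : ℝ => ((t : ℂ) * a, (t : ℂ) * x.1, (t : ℂ) * x.2.1, (t : ℂ) ^ 2 * x.2.2)
  have hf : Continuous f := by fun_prop
  have hlim : Tendsto f (𝓝[<] 1) (𝓝 (a, x)) := by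
    simpa [f] using tendsto_nhdsWithin_of_tendsto_nhds (hf.tendsto 1)
  refine mem_closure_of_tendsto hlim ?_
  filter_upwards [Ioo_mem_nhdsLT one_pos] with t ht
  exact scale_mem_hexablock hx ha ht.1.le ht.2

end DistinguishedBoundary

/-- Bounds `|a|² + |x₁|² ≤ 1` and `|a|² + |x₂|² ≤ 1` on `closure ℍ`
(strict for `ℍ`), and the characterization over `b𝔼`. -/
theorem stmt13 :
    (∀ q ∈ closure hexablock,
      ‖q.1‖ ^ 2 + ‖q.2.1‖ ^ 2 ≤ 1 ∧ ‖q.1‖ ^ 2 + ‖q.2.2.1‖ ^ 2 ≤ 1) ∧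
    (∀ q ∈ hexablock, ‖q.1‖ ^ 2 + ‖q.2.1‖ ^ 2 < 1) ∧
    (∀ a x₁ x₂ x₃ : ℂ, (x₁, x₂, x₃) ∈ bE →
      ((a, x₁, x₂, x₃) ∈ closure hexablock ↔ ‖a‖ ^ 2 + ‖x₁‖ ^ 2 ≤ 1)) :=
  ⟨fun _ => sq_norm_add_sq_norm_le_one_of_mem_closure_hexablock,
    fun _ hq => (sq_norm_add_sq_norm_lt_one_of_mem_hexablock hq).1,
    fun _ _ _ _ hx => ⟨fun h => (sq_norm_add_sq_norm_le_one_of_mem_closure_hexablock h).1,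
      mem_closure_hexablock_of_mem_bE hx⟩⟩
end
end
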